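/- Let CS be a constant specification, let x and y be distinct proof variables, and let T = ⟨Tree, ⊴⟩ be a temporal frame that is not a mixed successor frame. Then there is a CS-normal jstit model M based on T and a moment-history pair (m, h) of M such that M, m, h ⊭ K(□Ex ∨ ¬□Ey) → (Ex ∨ ¬Ey). -/

import Mathlib

/-! Preliminaries: temporal frames, stit frames, jstit frames, the language of
JA-STIT, jstit models, satisfaction, and the Hilbert system Σ_D(CS). -/

/-- A temporal frame: a nonempty set of moments with a partial order satisfying
historical connection and no backward branching. -/
structure TemporalFrame (Mo : Type) : Type where
  le : Mo → Mo → Prop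
  le_refl : ∀ m, le m m
  le_antisymm : ∀ {m m'}, le m m' → le m' m → m = m'
  le_trans : ∀ {m1 m2 m3}, le m1 m2 → le m2 m3 → le m1 m3
  nonempty : Nonempty Mo
  hist_conn : ∀ m m1, ∃ m2, le m2 m ∧ le m2 m1
  no_backward : ∀ m m1 m2, le m1 m → le m2 m → le m1 m2 ∨ le m2 m1

namespace TemporalFrame

variable {Mo : Type} (T : TemporalFrame Mo)

/-- The strict companion of the temporal order. -/
def lt (m m' : Mo) : Prop := T.le m m' ∧ m ≠ m'

/-- A history is a maximal chain of moments w.r.t. the temporal order. -/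
def IsHistory (h : Set Mo) : Prop :=
  IsChain T.le h ∧ ∀ h' : Set Mo, IsChain T.le h' → h ⊆ h' → h' = h

/-- `T.H m` is the set of histories passing through the moment `m`. -/
def H (m : Mo) : Set (Set Mo) := { h | T.IsHistory h ∧ m ∈ h }

/-- Histories `h` and `g` are undivided at `m`. -/
def Undiv (m : Mo) (h g : Set Mo) : Prop := ∃ m', T.lt m m' ∧ m' ∈ h ∧ m' ∈ g

/-- `m'` is an immediate successor of `m`. -/
def Next (m m' : Mo) : Prop := T.lt m m' ∧ ∀ m'', T.lt m'' m' → T.le m'' m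

/-- Mixed successor condition on (the temporal part of) a frame. -/
def MixSucc : Prop :=
  ∀ m m1 : Mo,
    (T.lt m m1 → ∃ m2, T.le m2 m1 ∧ T.Next m m2) ∨
    (∀ h ∈ T.H m, ∀ g ∈ T.H m, T.Undiv m h g)

end TemporalFrame

/-- A stit frame for an agent community `Ag`: a temporal frame together with a choice
function assigning to each moment and agent a partition of the histories through that
moment, subject to no choice between undivided histories and independence of agents. -/
structure StitFrame (Mo : Type) (Ag : Type) extends TemporalFrame Mo where
  choice : Mo → Ag → Set (Set (Set Mo))
  choice_cell_nonempty : ∀ m j C, C ∈ choice m j → C.Nonempty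
  choice_cell_sub : ∀ m j C, C ∈ choice m j → C ⊆ toTemporalFrame.H m
  choice_cover : ∀ m j h, h ∈ toTemporalFrame.H m → ∃ C ∈ choice m j, h ∈ C
  choice_disjoint : ∀ m j C C', C ∈ choice m j → C' ∈ choice m j →
    (C ∩ C').Nonempty → C = C'
  no_choice_undiv : ∀ m j h h', h ∈ toTemporalFrame.H m → h' ∈ toTemporalFrame.H m →
    toTemporalFrame.Undiv m h h' → ∀ C ∈ choice m j, h ∈ C → h' ∈ C
  independence : ∀ m (f : Ag → Set (Set Mo)), (∀ j, f j ∈ choice m j) →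
    (⋂ j, f j).Nonempty

/-- A justification stit (jstit) frame for `Ag`: a stit frame together with two
epistemic preorders `R ⊆ R_e`, with the temporal order included in `R`. -/
structure JstitFrame (Mo : Type) (Ag : Type) extends StitFrame Mo Ag where
  R : Mo → Mo → Prop
  Re : Mo → Mo → Prop
  R_refl : ∀ m, R m m
  R_trans : ∀ {m1 m2 m3}, R m1 m2 → R m2 m3 → R m1 m3
  Re_refl : ∀ m, Re m m
  Re_trans : ∀ {m1 m2 m3}, Re m1 m2 → Re m2 m3 → Re m1 m3
  R_sub_Re : ∀ {m m'}, R m m' → Re m m'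
  le_sub_R : ∀ {m m'}, le m m' → R m m'

namespace JstitFrame

variable {Mo : Type} {Ag : Type} (F : JstitFrame Mo Ag)

/-- The family `Θ_m` of subsets of the set of moments associated with a moment `m`. -/
def Theta (m : Mo) : Set (Set Mo) :=
  { S | m ∈ S ∧
    (∀ m1 m2, m1 ∈ S → F.Re m1 m2 → m2 ∈ S) ∧
    (∀ m1, (∀ h ∈ F.toTemporalFrame.H m1,
        ∃ m2 ∈ h, F.toTemporalFrame.Next m1 m2 ∧ m2 ∈ S) → m1 ∈ S) ∧
    (∀ m1, m1 ∈ S →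
      (∀ m2, F.toTemporalFrame.lt m2 m1 →
        ∃ m3, F.toTemporalFrame.lt m2 m3 ∧ F.toTemporalFrame.lt m3 m1) →
      ∃ m4, F.toTemporalFrame.lt m4 m1 ∧ m4 ∈ S) }

/-- A jstit frame is unirelational iff `R_e ⊆ R`. -/
def Unirelational : Prop := ∀ m m', F.Re m m' → F.R m m'

/-- Regularity of a jstit frame. -/
def Regular : Prop :=
  ∀ m m1 : Mo, F.toTemporalFrame.lt m m1 →
    (∃ S : Set Mo,
      (∀ m0, F.toTemporalFrame.lt m m0 → F.le m0 m1 → S ∈ F.Theta m0) ∧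
      m ∉ S ∧
      ∃ h' ∈ F.toTemporalFrame.H m,
        (∀ g ∈ F.toTemporalFrame.H m1, ¬ F.toTemporalFrame.Undiv m h' g) ∧
        (∀ m' ∈ h', F.toTemporalFrame.Next m m' → m' ∉ S)) →
    ∃ m2, F.le m2 m1 ∧ F.toTemporalFrame.Next m m2

end JstitFrame

/-- Proof polynomials over proof variables `PVar` and proof constants `PConst`. -/
inductive Pol (PVar PConst : Type) : Type
  | var : PVar → Pol PVar PConst
  | const : PConst → Pol PVar PConst
  | plus : Pol PVar PConst → Pol PVar PConst → Pol PVar PConst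
  | times : Pol PVar PConst → Pol PVar PConst → Pol PVar PConst
  | bang : Pol PVar PConst → Pol PVar PConst

/-- Formulas of JA-STIT. -/
inductive Form (Ag PVar PConst PropVar : Type) : Type
  | pv : PropVar → Form Ag PVar PConst PropVar
  | and : Form Ag PVar PConst PropVar → Form Ag PVar PConst PropVar →
      Form Ag PVar PConst PropVar
  | neg : Form Ag PVar PConst PropVar → Form Ag PVar PConst PropVar
  | stit : Ag → Form Ag PVar PConst PropVar → Form Ag PVar PConst PropVar
  | box : Form Ag PVar PConst PropVar → Form Ag PVar PConst PropVar
  | proves : Pol PVar PConst → Form Ag PVar PConst PropVar → Form Ag PVar PConst PropVar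
  | know : Form Ag PVar PConst PropVar → Form Ag PVar PConst PropVar
  | ann : Pol PVar PConst → Form Ag PVar PConst PropVar

namespace Form

variable {Ag PVar PConst PropVar : Type}

/-- Implication, defined as usual from `¬` and `∧`. -/
def imp (A B : Form Ag PVar PConst PropVar) : Form Ag PVar PConst PropVar :=
  neg (and A (neg B))

/-- Disjunction, defined as usual. -/
def or (A B : Form Ag PVar PConst PropVar) : Form Ag PVar PConst PropVar :=
  neg (and (neg A) (neg B))

/-- The dual `◇` of the historical necessity modality. -/
def dia (A : Form Ag PVar PConst PropVar) : Form Ag PVar PConst PropVar :=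
  neg (box (neg A))

/-- Falsum, defined as usual. -/
def bot [Inhabited PropVar] : Form Ag PVar PConst PropVar :=
  and (pv default) (neg (pv default))

end Form

/-- Conjunction of a nonempty list of formulas (head plus tail). -/
def andList {Ag PVar PConst PropVar : Type} :
    Form Ag PVar PConst PropVar → List (Form Ag PVar PConst PropVar) →
      Form Ag PVar PConst PropVar
  | A, [] => A
  | A, B :: L => Form.and A (andList B L)

/-- Disjunction of a list of formulas. -/
def bigOr {Ag PVar PConst PropVar : Type} [Inhabited PropVar] :
    List (Form Ag PVar PConst PropVar) → Form Ag PVar PConst PropVar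
  | [] => Form.bot
  | [A] => A
  | A :: B :: L => Form.or A (bigOr (B :: L))

/-- A classical propositional tautology: a formula true under every Boolean valuation
commuting with `∧` and `¬` (all other formulas being treated as atoms). -/
def Tautology {Ag PVar PConst PropVar : Type} (A : Form Ag PVar PConst PropVar) : Prop :=
  ∀ v : Form Ag PVar PConst PropVar → Bool,
    (∀ B C, v (Form.and B C) = (v B && v C)) →
    (∀ B, v (Form.neg B) = !v B) →
    v A = true

/-- The axiom schemes (A0)–(A9) of Σ_D. -/
inductive Ax {Ag PVar PConst PropVar : Type} : Form Ag PVar PConst PropVar → Prop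
  -- (A0) classical propositional tautologies
  | a0 {A} : Tautology A → Ax A
  -- (A1) S5 axioms for □
  | boxK {A B} : Ax (Form.imp (Form.box (Form.imp A B))
      (Form.imp (Form.box A) (Form.box B)))
  | boxT {A} : Ax (Form.imp (Form.box A) A)
  | box4 {A} : Ax (Form.imp (Form.box A) (Form.box (Form.box A)))
  | box5 {A} : Ax (Form.imp (Form.neg (Form.box A)) (Form.box (Form.neg (Form.box A))))
  -- (A1) S5 axioms for each [j]
  | stitK {j : Ag} {A B} : Ax (Form.imp (Form.stit j (Form.imp A B))
      (Form.imp (Form.stit j A) (Form.stit j B)))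
  | stitT {j : Ag} {A} : Ax (Form.imp (Form.stit j A) A)
  | stit4 {j : Ag} {A} : Ax (Form.imp (Form.stit j A) (Form.stit j (Form.stit j A)))
  | stit5 {j : Ag} {A} : Ax (Form.imp (Form.neg (Form.stit j A))
      (Form.stit j (Form.neg (Form.stit j A))))
  -- (A2)
  | a2 {j : Ag} {A} : Ax (Form.imp (Form.box A) (Form.stit j A))
  -- (A3), for pairwise distinct agents
  | a3 {p : Ag × Form Ag PVar PConst PropVar} {L : List (Ag × Form Ag PVar PConst PropVar)} :
      (((p :: L).map Prod.fst).Nodup) →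
      Ax (Form.imp
        (andList (Form.dia (Form.stit p.1 p.2)) (L.map fun q => Form.dia (Form.stit q.1 q.2)))
        (Form.dia (andList (Form.stit p.1 p.2) (L.map fun q => Form.stit q.1 q.2))))
  -- (A4)
  | a4 {s t : Pol PVar PConst} {A B} : Ax (Form.imp (Form.proves s (Form.imp A B))
      (Form.imp (Form.proves t A) (Form.proves (Pol.times s t) B)))
  -- (A5)
  | a5 {t : Pol PVar PConst} {A} : Ax (Form.imp (Form.proves t A)
      (Form.and (Form.proves (Pol.bang t) (Form.proves t A)) (Form.know A)))
  -- (A6)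
  | a6 {s t : Pol PVar PConst} {A} : Ax (Form.imp
      (Form.or (Form.proves s A) (Form.proves t A)) (Form.proves (Pol.plus s t) A))
  -- (A7) S4 axioms for K
  | knowK {A B} : Ax (Form.imp (Form.know (Form.imp A B))
      (Form.imp (Form.know A) (Form.know B)))
  | knowT {A} : Ax (Form.imp (Form.know A) A)
  | know4 {A} : Ax (Form.imp (Form.know A) (Form.know (Form.know A)))
  -- (A8)
  | a8 {A} : Ax (Form.imp (Form.know A) (Form.box (Form.know (Form.box A))))
  -- (A9)
  | a9 {t : Pol PVar PConst} : Ax (Form.imp (Form.box (Form.ann t))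
      (Form.know (Form.box (Form.ann t))))

/-- Iterated prefixes `c_n : … : c_1 : A` of instances `A` of the axiom schemes. -/
inductive ConstIter {Ag PVar PConst PropVar : Type} : Form Ag PVar PConst PropVar → Prop
  | base {c : PConst} {A} : Ax A → ConstIter (Form.proves (Pol.const c) A)
  | step {c : PConst} {B} : ConstIter B → ConstIter (Form.proves (Pol.const c) B)

/-- A constant specification: a set of formulas of the form `c_n : … : c_1 : A` with `A`
an instance of (A0)–(A9), closed under deleting the outermost constant. -/
def IsConstSpec {Ag PVar PConst PropVar : Type}
    (CS : Set (Form Ag PVar PConst PropVar)) : Prop :=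
  (∀ B ∈ CS, ConstIter B) ∧
  ∀ (c c' : PConst) (B : Form Ag PVar PConst PropVar),
    Form.proves (Pol.const c) (Form.proves (Pol.const c') B) ∈ CS →
    Form.proves (Pol.const c') B ∈ CS

/-- Provability in Σ_D(CS): axioms (A0)–(A9), modus ponens (R1), K-necessitation (R2),
the rule (R_D) and the rule (R_CS). -/
inductive Proves {Ag PVar PConst PropVar : Type} [Inhabited PropVar]
    (CS : Set (Form Ag PVar PConst PropVar)) : Form Ag PVar PConst PropVar → Prop
  | ax {A} : Ax A → Proves CS A
  | mp {A B} : Proves CS (Form.imp A B) → Proves CS A → Proves CS B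
  | nec {A} : Proves CS A → Proves CS (Form.know A)
  | rd {A : Form Ag PVar PConst PropVar} {ts ss : List (Pol PVar PConst)}
      (hne : ts ++ ss ≠ []) :
      Proves CS (Form.imp (Form.know A)
        (bigOr ((ts.map fun t => Form.neg (Form.box (Form.ann t))) ++
                (ss.map fun s => Form.box (Form.ann s))))) →
      Proves CS (Form.imp (Form.know A)
        (bigOr ((ts.map fun t => Form.neg (Form.ann t)) ++
                (ss.map fun s => Form.ann s))))
  | rcs {B} : B ∈ CS → Proves CS B

/-- Γ is consistent in Σ_D(CS): no finite nonempty conjunction of members of Γ provably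
implies falsum. -/
def CSConsistent {Ag PVar PConst PropVar : Type} [Inhabited PropVar]
    (CS Γ : Set (Form Ag PVar PConst PropVar)) : Prop :=
  ¬ ∃ (A : Form Ag PVar PConst PropVar) (L : List (Form Ag PVar PConst PropVar)),
      A ∈ Γ ∧ (∀ B ∈ L, B ∈ Γ) ∧ Proves CS (Form.imp (andList A L) Form.bot)

/-- A jstit model for `Ag`: a jstit frame together with `Act`, an admissible evidence
function `E` and an evaluation `V`, subject to the semantical constraints. -/
structure JstitModel (Mo : Type) (Ag PVar PConst PropVar : Type)
    extends JstitFrame Mo Ag where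
  act : Mo → Set Mo → Set (Pol PVar PConst)
  ev : Mo → Pol PVar PConst → Set (Form Ag PVar PConst PropVar)
  val : PropVar → Set (Mo × Set Mo)
  -- monotonicity of evidence
  ev_mono : ∀ m m' t, Re m m' → ev m t ⊆ ev m' t
  -- evidence closure properties
  ev_app : ∀ m s t A B, Form.imp A B ∈ ev m s → A ∈ ev m t → B ∈ ev m (Pol.times s t)
  ev_sum_left : ∀ m s t, ev m s ⊆ ev m (Pol.plus s t)
  ev_sum_right : ∀ m s t, ev m t ⊆ ev m (Pol.plus s t)
  ev_bang : ∀ m t A, A ∈ ev m t → Form.proves t A ∈ ev m (Pol.bang t)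
  -- expansion of presented proofs
  expansion : ∀ m m' h, toTemporalFrame.lt m' m → h ∈ toTemporalFrame.H m →
    act m' h ⊆ act m h
  -- no new proofs guaranteed
  no_new : ∀ m t, (∀ h ∈ toTemporalFrame.H m, t ∈ act m h) →
    ∃ m' h, toTemporalFrame.lt m' m ∧ h ∈ toTemporalFrame.H m ∧ t ∈ act m' h
  -- presenting a new proof makes histories divide
  divide : ∀ m h h', h ∈ toTemporalFrame.H m → h' ∈ toTemporalFrame.H m →
    toTemporalFrame.Undiv m h h' → act m h = act m h'
  -- presented proofs are epistemically transparent
  transparent : ∀ m m' t, Re m m' → (∀ h ∈ toTemporalFrame.H m, t ∈ act m h) →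
    ∀ h' ∈ toTemporalFrame.H m', t ∈ act m' h'

namespace JstitModel

variable {Mo Ag PVar PConst PropVar : Type}

/-- `Act_m`, the set of proofs presented at `m` under every history through `m`. -/
def ActM (M : JstitModel Mo Ag PVar PConst PropVar) (m : Mo) : Set (Pol PVar PConst) :=
  { t | ∀ h ∈ M.toTemporalFrame.H m, t ∈ M.act m h }

/-- The satisfaction relation for jstit models. -/
def Sat (M : JstitModel Mo Ag PVar PConst PropVar) :
    Form Ag PVar PConst PropVar → Mo → Set Mo → Prop
  | Form.pv p, m, h => (m, h) ∈ M.val p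
  | Form.and A B, m, h => M.Sat A m h ∧ M.Sat B m h
  | Form.neg A, m, h => ¬ M.Sat A m h
  | Form.stit j A, m, h => ∀ h' C, C ∈ M.choice m j → h ∈ C → h' ∈ C → M.Sat A m h'
  | Form.box A, m, _ => ∀ h' ∈ M.toTemporalFrame.H m, M.Sat A m h'
  | Form.know A, m, _ => ∀ m' h', M.R m m' → h' ∈ M.toTemporalFrame.H m' → M.Sat A m' h'
  | Form.proves t A, m, _ => A ∈ M.ev m t ∧
      ∀ m' h', M.Re m m' → h' ∈ M.toTemporalFrame.H m' → M.Sat A m' h'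
  | Form.ann t, m, h => t ∈ M.act m h

/-- Validity of a formula in a jstit model. -/
def Valid (M : JstitModel Mo Ag PVar PConst PropVar)
    (A : Form Ag PVar PConst PropVar) : Prop :=
  ∀ m h, h ∈ M.toTemporalFrame.H m → M.Sat A m h

end JstitModel

/-- CS-normality of a jstit model. -/
def CSNormal {Mo Ag PVar PConst PropVar : Type}
    (CS : Set (Form Ag PVar PConst PropVar))
    (M : JstitModel Mo Ag PVar PConst PropVar) : Prop :=
  ∀ (c : PConst) (m : Mo) (A : Form Ag PVar PConst PropVar),
    Form.proves (Pol.const c) A ∈ CS → A ∈ M.ev m (Pol.const c)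

/-! Failing the mixed successor condition gives a moment `ms` and a later moment `m1` such that
no moment below `m1` is an immediate successor of `ms`, and two histories divided at `ms`. For
a history `h0` through `ms` and `m1`, one of these two is divided from `h0` at `ms`. Present `x`
and `y` at every moment above some moment of `h0` after `ms`, and `y` also at `ms` itself on the
histories still undivided from `h0`. The moments of `h0` after `ms` have no least element, so
no proof is ever presented for the first time; with trivial choices and `R = R_e = ⊴` this is a
CS-normal jstit model. Now `□Ey` holds only above the branch of `h0`, where `□Ex` holds as well,
so `K(□Ex ∨ ¬□Ey)` is true at `(ms, h0)`, while there `Ey` is true and `Ex` is false. -/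

namespace TemporalFrame

variable {Mo : Type} (T : TemporalFrame Mo)

theorem exists_isHistory_superset {s : Set Mo} (hs : IsChain T.le s) :
    ∃ h, T.IsHistory h ∧ s ⊆ h := by
  obtain ⟨h, hmax, hsh⟩ := hs.exists_maxChain
  exact ⟨h, ⟨hmax.1, fun _ hc hsub => (hmax.2 hc hsub).symm⟩, hsh⟩

theorem H_nonempty (m : Mo) : (T.H m).Nonempty := by
  obtain ⟨h, hh, hmh⟩ := T.exists_isHistory_superset (IsChain.singleton (a := m))
  exact ⟨h, hh, hmh rfl⟩

variable {T}

theorem IsHistory.le_total {h : Set Mo} (hh : T.IsHistory h) {a b : Mo} (ha : a ∈ h)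
    (hb : b ∈ h) : T.le a b ∨ T.le b a := by
  rcases eq_or_ne a b with rfl | hne
  · exact Or.inl (T.le_refl a)
  · exact hh.1 ha hb hne

theorem IsHistory.mem_of_le {h : Set Mo} (hh : T.IsHistory h) {m n : Mo} (hn : n ∈ h)
    (hmn : T.le m n) : m ∈ h := by
  have hchain : IsChain T.le (insert m h) := by
    refine hh.1.insert fun b hb _ => ?_
    rcases hh.le_total hb hn with hbn | hnb
    · exact T.no_backward n m b hmn hbn
    · exact Or.inl (T.le_trans hmn hnb)
  rw [← hh.2 _ hchain (Set.subset_insert m h)]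
  exact Set.mem_insert m h

theorem undiv_comm {m : Mo} {h g : Set Mo} : T.Undiv m h g ↔ T.Undiv m g h :=
  ⟨fun ⟨p, hp, hph, hpg⟩ => ⟨p, hp, hpg, hph⟩, fun ⟨p, hp, hpg, hph⟩ => ⟨p, hp, hph, hpg⟩⟩

theorem Undiv.trans {m : Mo} {h g k : Set Mo} (hh : T.IsHistory h) (hg : T.IsHistory g)
    (hk : T.IsHistory k) (hhg : T.Undiv m h g) (hgk : T.Undiv m g k) : T.Undiv m h k := by
  obtain ⟨p, hp, hph, hpg⟩ := hhg
  obtain ⟨q, hq, hqg, hqk⟩ := hgk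
  rcases hg.le_total hpg hqg with hpq | hqp
  · exact ⟨p, hp, hph, hk.mem_of_le hqk hpq⟩
  · exact ⟨q, hq, hh.mem_of_le hph hqp, hqk⟩

theorem exists_between_of_forall_not_next {h : Set Mo} (hh : T.IsHistory h) {ms m1 : Mo}
    (hm1 : m1 ∈ h) (hlt : T.lt ms m1) (hnext : ∀ m2, T.le m2 m1 → ¬ T.Next ms m2) :
    ∀ m ∈ h, T.lt ms m → ∃ k ∈ h, T.lt ms k ∧ T.lt k m := by
  intro m hmh hm
  by_cases hmm1 : T.le m m1
  · have hnm := hnext m hmm1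
    simp only [Next, hm, true_and, not_forall] at hnm
    obtain ⟨k, hkm, hkms⟩ := hnm
    have hmsk : T.le ms k := (T.no_backward m k ms hkm.1 hm.1).resolve_left hkms
    refine ⟨k, hh.mem_of_le hmh hkm.1, ⟨hmsk, ?_⟩, hkm⟩
    rintro rfl
    exact hkms (T.le_refl ms)
  · have hm1m : T.le m1 m := (hh.le_total hmh hm1).resolve_left hmm1
    exact ⟨m1, hm1, hlt, hm1m, fun h => hmm1 (h ▸ T.le_refl m)⟩

variable (T)

def trivialStitFrame (Ag : Type) : StitFrame Mo Ag where
  toTemporalFrame := T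
  choice m _ := {T.H m}
  choice_cell_nonempty := by
    rintro m j C rfl
    exact T.H_nonempty m
  choice_cell_sub := by
    rintro m j C rfl
    exact subset_rfl
  choice_cover m _ _ hh := ⟨T.H m, rfl, hh⟩
  choice_disjoint := by
    rintro m j C C' rfl rfl _
    rfl
  no_choice_undiv := by
    rintro m j h h' - hh' - C rfl -
    exact hh'
  independence m f hf := by
    obtain ⟨h, hh⟩ := T.H_nonempty m
    exact ⟨h, Set.mem_iInter.2 fun j => (hf j).symm ▸ hh⟩

end TemporalFrame

def StitFrame.leJstitFrame {Mo Ag : Type} (F : StitFrame Mo Ag) : JstitFrame Mo Ag where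
  toStitFrame := F
  R := F.le
  Re := F.le
  R_refl := F.le_refl
  R_trans := F.le_trans
  Re_refl := F.le_refl
  Re_trans := F.le_trans
  R_sub_Re := id
  le_sub_R := id

namespace JstitModel

variable {Mo Ag PVar PConst PropVar : Type} (M : JstitModel Mo Ag PVar PConst PropVar)
  {A B : Form Ag PVar PConst PropVar} {m : Mo} {h : Set Mo}

theorem sat_imp : M.Sat (A.imp B) m h ↔ (M.Sat A m h → M.Sat B m h) := by
  simp only [Form.imp, Sat, not_and, not_not]

theorem sat_or : M.Sat (A.or B) m h ↔ M.Sat A m h ∨ M.Sat B m h := by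
  simp only [Form.or, Sat, not_and_or, not_not]

theorem sat_box_ann {t : Pol PVar PConst} : M.Sat (Form.box (Form.ann t)) m h ↔ t ∈ M.ActM m :=
  Iff.rfl

end JstitModel

namespace TemporalFrame

section WitnessAct

variable {Mo PVar PConst : Type} (T : TemporalFrame Mo) (ms : Mo) (h0 : Set Mo)

def AboveBranch (m : Mo) : Prop := ∃ n ∈ h0, T.lt ms n ∧ T.le n m

def witnessAct (x y : PVar) (m : Mo) (h : Set Mo) : Set (Pol PVar PConst) :=
  {t | (t = .var x ∨ t = .var y) ∧ T.AboveBranch ms h0 m ∨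
    t = .var y ∧ m = ms ∧ T.Undiv ms h h0}

variable {T ms h0}

theorem AboveBranch.mono {m m' : Mo} (hm : T.AboveBranch ms h0 m) (hmm' : T.le m m') :
    T.AboveBranch ms h0 m' :=
  let ⟨n, hn0, hmsn, hnm⟩ := hm
  ⟨n, hn0, hmsn, T.le_trans hnm hmm'⟩

theorem not_aboveBranch_self : ¬ T.AboveBranch ms h0 ms :=
  fun ⟨_, _, hmsn, hnms⟩ => hmsn.2 (T.le_antisymm hmsn.1 hnms)

theorem aboveBranch_of_undiv (hh0 : T.IsHistory h0) {h : Set Mo} (hh : T.IsHistory h)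
    (hund : T.Undiv ms h h0) {m : Mo} (hmh : m ∈ h) (hm : T.lt ms m) :
    T.AboveBranch ms h0 m := by
  obtain ⟨n, hn, hnh, hn0⟩ := hund
  rcases hh.le_total hnh hmh with hnm | hmn
  · exact ⟨n, hn0, hn, hnm⟩
  · exact ⟨m, hh0.mem_of_le hn0 hmn, hm, T.le_refl m⟩

variable {x y : PVar}

theorem witnessAct_subset (hh0 : T.IsHistory h0) {m m' : Mo} {h : Set Mo} (hlt : T.lt m' m)
    (hh : h ∈ T.H m) :
    T.witnessAct ms h0 x y m' h ⊆ (T.witnessAct ms h0 x y m h : Set (Pol PVar PConst)) := by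
  rintro t (⟨hxy, habove⟩ | ⟨rfl, rfl, hund⟩)
  · exact Or.inl ⟨hxy, habove.mono hlt.1⟩
  · exact Or.inl ⟨Or.inr rfl, aboveBranch_of_undiv hh0 hh.1 hund hh.2 hlt⟩

theorem witnessAct_undiv (hh0 : T.IsHistory h0) {m : Mo} {h h' : Set Mo} (hh : h ∈ T.H m)
    (hh' : h' ∈ T.H m) (hund : T.Undiv m h h') :
    (T.witnessAct ms h0 x y m h : Set (Pol PVar PConst)) = T.witnessAct ms h0 x y m h' := by
  have key : ∀ {h h'}, h ∈ T.H m → h' ∈ T.H m → T.Undiv m h h' →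
      T.witnessAct ms h0 x y m h ⊆ (T.witnessAct ms h0 x y m h' : Set (Pol PVar PConst)) := by
    rintro h h' hh hh' hund t (hab | ⟨rfl, rfl, hund0⟩)
    · exact Or.inl hab
    · exact Or.inr ⟨rfl, rfl, (undiv_comm.1 hund).trans hh'.1 hh.1 hh0 hund0⟩
  exact (key hh hh' hund).antisymm (key hh' hh (undiv_comm.1 hund))

theorem aboveBranch_of_forall_mem_witnessAct {g : Set Mo} (hg : g ∈ T.H ms)
    (hgd : ¬ T.Undiv ms g h0) {m : Mo} {t : Pol PVar PConst}
    (ht : ∀ h ∈ T.H m, t ∈ T.witnessAct ms h0 x y m h) :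
    (t = .var x ∨ t = .var y) ∧ T.AboveBranch ms h0 m := by
  obtain ⟨h, hh⟩ := T.H_nonempty m
  rcases ht h hh with htm | ⟨rfl, rfl, -⟩
  · exact htm
  · rcases ht g hg with ⟨-, habove⟩ | ⟨-, -, hund⟩
    · exact absurd habove not_aboveBranch_self
    · exact absurd hund hgd

end WitnessAct

variable {Mo PVar : Type} (T : TemporalFrame Mo) {ms : Mo} {h0 : Set Mo}

def witnessModel (Ag PConst PropVar : Type) (x y : PVar) (hh0 : T.IsHistory h0)
    (hdense : ∀ m ∈ h0, T.lt ms m → ∃ k ∈ h0, T.lt ms k ∧ T.lt k m)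
    (hdiv : ∃ g ∈ T.H ms, ¬ T.Undiv ms g h0) : JstitModel Mo Ag PVar PConst PropVar where
  toJstitFrame := (T.trivialStitFrame Ag).leJstitFrame
  act := T.witnessAct ms h0 x y
  ev _ _ := Set.univ
  val _ := ∅
  ev_mono _ _ _ _ := subset_rfl
  ev_app _ _ _ _ _ _ _ := trivial
  ev_sum_left _ _ _ := Set.subset_univ _
  ev_sum_right _ _ _ := Set.subset_univ _
  ev_bang _ _ _ _ := trivial
  expansion _ _ _ hlt hh := witnessAct_subset hh0 hlt hh
  no_new m t ht := by
    obtain ⟨g, hg, hgd⟩ := hdiv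
    obtain ⟨htxy, n, hn0, hmsn, hnm⟩ := aboveBranch_of_forall_mem_witnessAct hg hgd ht
    obtain ⟨k, hk0, hmsk, hkm⟩ : ∃ k ∈ h0, T.lt ms k ∧ T.lt k m := by
      by_cases hn : n = m
      · exact hn ▸ hdense n hn0 hmsn
      · exact ⟨n, hn0, hmsn, hnm, hn⟩
    obtain ⟨h, hh⟩ := T.H_nonempty m
    exact ⟨k, h, hkm, hh, Or.inl ⟨htxy, k, hk0, hmsk, T.le_refl k⟩⟩
  divide _ _ _ hh hh' hund := witnessAct_undiv hh0 hh hh' hund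
  transparent _ _ _ hle ht _ _ := by
    obtain ⟨g, hg, hgd⟩ := hdiv
    obtain ⟨htxy, habove⟩ := aboveBranch_of_forall_mem_witnessAct hg hgd ht
    exact Or.inl ⟨htxy, habove.mono hle⟩

theorem witnessModel_not_sat {Ag PConst PropVar : Type} {x y : PVar}
    (hxy : x ≠ y) (hh0 : T.IsHistory h0)
    (hdense : ∀ m ∈ h0, T.lt ms m → ∃ k ∈ h0, T.lt ms k ∧ T.lt k m)
    (hdiv : ∃ g ∈ T.H ms, ¬ T.Undiv ms g h0) (hms : T.Undiv ms h0 h0) :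
    ¬ (T.witnessModel Ag PConst PropVar x y hh0 hdense hdiv).Sat (Form.imp
        (Form.know (Form.or (Form.box (Form.ann (Pol.var x)))
          (Form.neg (Form.box (Form.ann (Pol.var y))))))
        (Form.or (Form.ann (Pol.var x)) (Form.neg (Form.ann (Pol.var y))))) ms h0 := by
  obtain ⟨g, hg, hgd⟩ := hdiv
  rw [JstitModel.sat_imp, Classical.not_imp, JstitModel.sat_or, not_or]
  refine ⟨fun m h _ _ => ?_, fun hx => ?_, not_not.2 (Or.inr ⟨rfl, rfl, hms⟩)⟩
  · rw [JstitModel.sat_or, JstitModel.sat_box_ann, JstitModel.Sat, JstitModel.sat_box_ann]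
    refine or_iff_not_imp_right.2 fun hy => ?_
    obtain ⟨-, habove⟩ := aboveBranch_of_forall_mem_witnessAct hg hgd (not_not.1 hy)
    exact fun _ _ => Or.inl ⟨Or.inl rfl, habove⟩
  · rcases hx with ⟨-, habove⟩ | ⟨hxy', -⟩
    · exact not_aboveBranch_self habove
    · exact hxy (Pol.var.inj hxy')

end TemporalFrame

theorem stmt11_general {Mo Ag PVar PConst PropVar : Type}
    (CS : Set (Form Ag PVar PConst PropVar))
    (x y : PVar) (hxy : x ≠ y)
    (T : TemporalFrame Mo) (hT : ¬ T.MixSucc) :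
    ∃ M : JstitModel Mo Ag PVar PConst PropVar,
      M.toTemporalFrame = T ∧ CSNormal CS M ∧
      ∃ m h, h ∈ M.toTemporalFrame.H m ∧
        ¬ M.Sat (Form.imp
            (Form.know (Form.or (Form.box (Form.ann (Pol.var x)))
              (Form.neg (Form.box (Form.ann (Pol.var y))))))
            (Form.or (Form.ann (Pol.var x)) (Form.neg (Form.ann (Pol.var y))))) m h := by
  simp only [TemporalFrame.MixSucc] at hT
  push Not at hT
  obtain ⟨ms, m1, ⟨hlt, hnext⟩, ha, haH, hb, hbH, hab⟩ := hT
  obtain ⟨h0, hh0, hsub⟩ := T.exists_isHistory_superset (IsChain.pair hlt.1)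
  have hm1 : m1 ∈ h0 := hsub (by simp)
  have hdiv : ∃ g ∈ T.H ms, ¬ T.Undiv ms g h0 := by
    by_contra! hall
    exact hab ((hall ha haH).trans haH.1 hh0 hbH.1 (TemporalFrame.undiv_comm.1 (hall hb hbH)))
  have hdense := T.exists_between_of_forall_not_next hh0 hm1 hlt hnext
  exact ⟨T.witnessModel Ag PConst PropVar x y hh0 hdense hdiv, rfl, fun _ _ _ _ => trivial,
    ms, h0, ⟨hh0, hsub (by simp)⟩, T.witnessModel_not_sat hxy hh0 hdense hdiv ⟨m1, hlt, hm1, hm1⟩⟩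

/-- Corollary 2: every temporal frame outside the mixed successor class
carries a CS-normal jstit model falsifying `K(□Ex ∨ ¬□Ey) → (Ex ∨ ¬Ey)` at some
moment-history pair. -/
theorem stmt11 {Mo Ag PVar PConst PropVar : Type} [Finite Ag]
    [Countable PVar] [Infinite PVar] [Countable PConst] [Infinite PConst]
    [Countable PropVar] [Infinite PropVar] [Inhabited PropVar]
    (CS : Set (Form Ag PVar PConst PropVar)) (hCS : IsConstSpec CS)
    (x y : PVar) (hxy : x ≠ y)
    (T : TemporalFrame Mo) (hT : ¬ T.MixSucc) :
    ∃ M : JstitModel Mo Ag PVar PConst PropVar,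
      M.toTemporalFrame = T ∧ CSNormal CS M ∧
      ∃ m h, h ∈ M.toTemporalFrame.H m ∧
        ¬ M.Sat (Form.imp
            (Form.know (Form.or (Form.box (Form.ann (Pol.var x)))
              (Form.neg (Form.box (Form.ann (Pol.var y))))))
            (Form.or (Form.ann (Pol.var x)) (Form.neg (Form.ann (Pol.var y))))) m h :=
  stmt11_general CS x y hxy T hT
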